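/- arXiv:2005.11486 — 2 statements merged into one kernel-verified Lean document; each statement's English description precedes it below -/
import Mathlib

section
/- Let 0 < q1 < q2 < q ≤ 2 and define, for t > 0, u(t) = t^(1 - q1/q)·ρ(q-q2, q2-q1) - t^(1 - q2/q)·ρ(q-q1, q2-q1), where ρ(a,b) = sin(aπ/2)/sin(bπ/2). Then u attains its minimum on (0,∞) at t* = ((q-q2)·ρ(q-q1,q2-q1) / ((q-q1)·ρ(q-q2,q2-q1)))^(q/(q2-q1)) in case q < 2, and u(t) > -1 for all t > 0. -/
/-!
With `x = q - q1`, `y = q - q2`, `z = q2 - q1` we have `x = y + z` and `u t = A t^a - B t^b`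
with `a = x/q > b = y/q > 0` and `A, B > 0`. Such a function is minimised at its critical point
`T`: Bernoulli's inequality in the variable `(t/T)^b` gives `u t ≥ u T`, and
`u T = -(z/x) B T^b`. Writing `g w = sin (w π/2) / w`, the bound `u T > -1` becomes
`g(x)^x < g(y)^y g(z)^z`, which holds because `g` is strictly decreasing on `(0, 2]`: `sin` is
concave on `[0, π]` and vanishes at `0`.
-/

open Real

/-- `ρ(a,b) = sin(aπ/2)/sin(bπ/2)`. -/
noncomputable def rho (a b : ℝ) : ℝ := Real.sin (a * Real.pi / 2) / Real.sin (b * Real.pi / 2)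

/-- `u(t) = t^(1-q1/q)·ρ(q-q2, q2-q1) - t^(1-q2/q)·ρ(q-q1, q2-q1)`. -/
noncomputable def u (q q1 q2 t : ℝ) : ℝ :=
  t ^ (1 - q1 / q) * rho (q - q2) (q2 - q1) - t ^ (1 - q2 / q) * rho (q - q1) (q2 - q1)

open Set

lemma sin_mul_pi_div_two_pos {w : ℝ} (h0 : 0 < w) (h2 : w < 2) : 0 < sin (w * π / 2) :=
  sin_pos_of_pos_of_lt_pi (by positivity) (by nlinarith [pi_pos])

lemma rho_pos {a b : ℝ} (ha : 0 < a) (ha2 : a < 2) (hb : 0 < b) (hb2 : b < 2) :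
    0 < rho a b :=
  div_pos (sin_mul_pi_div_two_pos ha ha2) (sin_mul_pi_div_two_pos hb hb2)

lemma strictAntiOn_sin_div : StrictAntiOn (fun x => sin x / x) (Ioc 0 π) := by
  intro x hx y hy hxy
  have h := strictConcaveOn_sin_Icc.secant_strict_mono (left_mem_Icc.mpr pi_pos.le)
    (Ioc_subset_Icc_self hx) (Ioc_subset_Icc_self hy) hx.1.ne' hy.1.ne' hxy
  simpa only [sin_zero, sub_zero] using h

lemma strictAntiOn_sin_mul_pi_div_two_div :
    StrictAntiOn (fun w => sin (w * π / 2) / w) (Ioc 0 2) := by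
  have hscale : ∀ w ≠ 0, sin (w * π / 2) / w = π / 2 * (sin (w * π / 2) / (w * π / 2)) := by
    intro w hw
    field_simp
  have hmem : ∀ {w}, w ∈ Ioc (0 : ℝ) 2 → w * π / 2 ∈ Ioc 0 π := fun hw =>
    ⟨by have := hw.1; positivity, by nlinarith [hw.2, pi_pos]⟩
  intro v hv w hw hvw
  simp only [hscale v hv.1.ne', hscale w hw.1.ne']
  have hvw' : v * π / 2 < w * π / 2 := by nlinarith [pi_pos]
  exact mul_lt_mul_of_pos_left (strictAntiOn_sin_div (hmem hv) (hmem hw) hvw') (by positivity)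

lemma StrictAntiOn.rpow_add_lt_mul_rpow {g : ℝ → ℝ} {s : Set ℝ} (hg : StrictAntiOn g s)
    {y z : ℝ} (hy : 0 < y) (hz : 0 < z) (hys : y ∈ s) (hzs : z ∈ s) (hyzs : y + z ∈ s)
    (hpos : 0 < g (y + z)) : g (y + z) ^ (y + z) < g y ^ y * g z ^ z := by
  rw [rpow_add hpos]
  have hgy : g (y + z) < g y := hg hys hyzs (by linarith)
  have hgz : g (y + z) < g z := hg hzs hyzs (by linarith)
  exact mul_lt_mul'' (rpow_lt_rpow hpos.le hgy hy) (rpow_lt_rpow hpos.le hgz hz)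
    (by positivity) (by positivity)

lemma div_mul_div_rpow_lt_one {P Q S y z : ℝ} (hP : 0 < P) (hQ : 0 < Q) (hS : 0 < S)
    (hz : 0 < z) (h : P ^ (y + z) < Q ^ y * S ^ z) : P / S * (P / Q) ^ (y / z) < 1 := by
  have hpow : (P / S * (P / Q) ^ (y / z)) ^ z = P ^ (y + z) / (Q ^ y * S ^ z) := by
    rw [mul_rpow (by positivity) (by positivity), ← rpow_mul (by positivity),
      div_mul_cancel₀ y hz.ne', div_rpow hP.le hS.le, div_rpow hP.le hQ.le, rpow_add hP]
    field_simp
  rw [← rpow_lt_rpow_iff (by positivity) zero_le_one hz, one_rpow, hpow]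
  exact (div_lt_one (by positivity)).mpr h

lemma rho_mul_rpow_lt_one {x y z : ℝ} (hy : 0 < y) (hz : 0 < z) (hx : x = y + z)
    (hx2 : x < 2) : z / x * (rho x z * (y * rho x z / (x * rho y z)) ^ (y / z)) < 1 := by
  subst hx
  set g : ℝ → ℝ := fun w => sin (w * π / 2) / w
  have hgpos : ∀ {w : ℝ}, 0 < w → w < 2 → 0 < g w := fun h0 h2 =>
    div_pos (sin_mul_pi_div_two_pos h0 h2) h0
  have hsy := (sin_mul_pi_div_two_pos hy (by linarith)).ne'
  have hsz := (sin_mul_pi_div_two_pos hz (by linarith)).ne'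
  have e1 : z / (y + z) * rho (y + z) z = g (y + z) / g z := by
    simp only [g, rho]
    field_simp
  have e2 : y * rho (y + z) z / ((y + z) * rho y z) = g (y + z) / g y := by
    simp only [g, rho]
    field_simp
  rw [← mul_assoc, e1, e2]
  refine div_mul_div_rpow_lt_one (hgpos (by positivity) hx2) (hgpos hy (by linarith))
    (hgpos hz (by linarith)) hz ?_
  exact strictAntiOn_sin_mul_pi_div_two_div.rpow_add_lt_mul_rpow hy hz ⟨hy, by linarith⟩
    ⟨hz, by linarith⟩ ⟨by positivity, hx2.le⟩ (hgpos (by positivity) hx2)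

section CriticalPoint

variable {A B a b T : ℝ}

lemma rpow_mul_eq_of_critical (hA : 0 < A) (ha : 0 < a) (hT0 : 0 < T)
    (hT : T ^ (a - b) = b * B / (a * A)) : T ^ a * A = b / a * (T ^ b * B) := by
  rw [show a = (a - b) + b by ring, rpow_add hT0, hT, sub_add_cancel]
  field_simp

lemma rpow_mul_sub_rpow_mul_eq_of_critical (hA : 0 < A) (ha : 0 < a) (hT0 : 0 < T)
    (hT : T ^ (a - b) = b * B / (a * A)) :
    T ^ a * A - T ^ b * B = -((a - b) / a * (T ^ b * B)) := by
  rw [rpow_mul_eq_of_critical hA ha hT0 hT]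
  field_simp
  ring

lemma rpow_mul_sub_rpow_mul_le_of_critical (hA : 0 < A) (hB : 0 < B) (hb : 0 < b) (hab : b < a)
    (hT0 : 0 < T) (hT : T ^ (a - b) = b * B / (a * A)) {t : ℝ} (ht : 0 < t) :
    T ^ a * A - T ^ b * B ≤ t ^ a * A - t ^ b * B := by
  have ha : 0 < a := hb.trans hab
  have hcrit := rpow_mul_eq_of_critical hA ha hT0 hT
  set w := (t / T) ^ b with hw
  have htb : t ^ b = T ^ b * w := by
    rw [hw, div_rpow ht.le hT0.le]
    field_simp
  have hta : t ^ a = T ^ a * w ^ (a / b) := by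
    rw [hw, ← rpow_mul (by positivity), mul_div_cancel₀ a hb.ne', div_rpow ht.le hT0.le]
    field_simp
  have bernoulli : 1 + a / b * (w - 1) ≤ w ^ (a / b) := by
    have hw0 : 0 < w := by positivity
    simpa using one_add_mul_self_le_rpow_one_add (s := w - 1) (by linarith)
      ((one_le_div hb).mpr hab.le)
  have hTa : 0 < T ^ a * A := by positivity
  rw [hta, htb]
  calc T ^ a * A - T ^ b * B
      = T ^ a * A * (1 + a / b * (w - 1)) - T ^ b * w * B := by
        rw [hcrit]; field_simp; ring
    _ ≤ T ^ a * w ^ (a / b) * A - T ^ b * w * B := by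
        linarith [mul_le_mul_of_nonneg_left bernoulli hTa.le]

end CriticalPoint

theorem stmt_9 (q q1 q2 : ℝ) (h1 : 0 < q1) (h2 : q1 < q2) (h3 : q2 < q) (h4 : q ≤ 2) :
    (q < 2 → ∀ t : ℝ, 0 < t →
      u q q1 q2 (((q - q2) * rho (q - q1) (q2 - q1) /
          ((q - q1) * rho (q - q2) (q2 - q1))) ^ (q / (q2 - q1))) ≤ u q q1 q2 t) ∧
    (∀ t : ℝ, 0 < t → -1 < u q q1 q2 t) := by
  have hq : 0 < q := by linarith
  have hb : 0 < 1 - q2 / q := sub_pos.mpr ((div_lt_one hq).mpr h3)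
  have hab : 1 - q2 / q < 1 - q1 / q := by gcongr
  have hA : 0 < rho (q - q2) (q2 - q1) :=
    rho_pos (by linarith) (by linarith) (by linarith) (by linarith)
  have hB : 0 < rho (q - q1) (q2 - q1) :=
    rho_pos (by linarith) (by linarith) (by linarith) (by linarith)
  set R := (q - q2) * rho (q - q1) (q2 - q1) / ((q - q1) * rho (q - q2) (q2 - q1)) with hR_def
  have hR : 0 < R := div_pos (mul_pos (by linarith) hB) (mul_pos (by linarith) hA)
  have hpow : ∀ c, (R ^ (q / (q2 - q1))) ^ c = R ^ (q / (q2 - q1) * c) := fun c =>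
    (rpow_mul hR.le _ _).symm
  have hcrit : (R ^ (q / (q2 - q1))) ^ ((1 - q1 / q) - (1 - q2 / q)) =
      (1 - q2 / q) * rho (q - q1) (q2 - q1) / ((1 - q1 / q) * rho (q - q2) (q2 - q1)) := by
    rw [hpow, show q / (q2 - q1) * ((1 - q1 / q) - (1 - q2 / q)) = 1 by
      field_simp [(by linarith : q2 - q1 ≠ 0)]; ring, rpow_one, hR_def]
    field_simp
  have hmin : ∀ t : ℝ, 0 < t → u q q1 q2 (R ^ (q / (q2 - q1))) ≤ u q q1 q2 t := fun t ht =>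
    rpow_mul_sub_rpow_mul_le_of_critical hA hB hb hab (by positivity) hcrit ht
  refine ⟨fun _ => hmin, fun t ht => lt_of_lt_of_le ?_ (hmin t ht)⟩
  have hgap : ((1 - q1 / q) - (1 - q2 / q)) / (1 - q1 / q) = (q2 - q1) / (q - q1) := by
    field_simp [(by linarith : q - q1 ≠ 0)]
    ring
  have hexp : q / (q2 - q1) * (1 - q2 / q) = (q - q2) / (q2 - q1) := by
    field_simp
  rw [u, rpow_mul_sub_rpow_mul_eq_of_critical hA (hb.trans hab) (by positivity) hcrit, hpow,
    hgap, hexp]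
  linarith [rho_mul_rpow_lt_one (x := q - q1) (y := q - q2) (z := q2 - q1) (by linarith)
    (by linarith) (by ring) (by linarith)]
end

section
/- For 0 < q1 < q2 < q ≤ 2, the minimum value u_min = -((q-q2)/sin((q-q2)π/2))^((q-q2)/(q2-q1)) · (sin((q-q1)π/2)/(q-q1))^((q-q1)/(q2-q1)) · (q2-q1)/sin((q2-q1)π/2) satisfies u_min > -1. -/
/-!
Write `a = q - q2`, `b = q2 - q1` and `g x = x / sin (x π / 2)`, so that `q - q1 = a + b` and the
product is `g a ^ (a / b) * g (a + b) ^ (-(a + b) / b) * g b`. Since `sin` is concave on `[0, π]`,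
`g` is strictly increasing on `(0, 2)`; replacing `g a` and `g b` by the larger `g (a + b)` makes
the exponents add up to zero, so the product is less than `1`.
-/

open Real

theorem Real.sin_div_lt_sin_div {x y : ℝ} (hx : 0 < x) (hxy : x < y) (hy : y ≤ π) :
    sin y / y < sin x / x := by
  simpa using strictConcaveOn_sin_Icc.secant_strict_mono (a := 0) ⟨le_rfl, pi_pos.le⟩
    ⟨hx.le, hxy.le.trans hy⟩ ⟨(hx.trans hxy).le, hy⟩ hx.ne' (hx.trans hxy).ne' hxy

theorem sin_mul_pi_div_two_pos_s10 {x : ℝ} (hx : 0 < x) (hx2 : x < 2) : 0 < sin (x * π / 2) :=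
  sin_pos_of_pos_of_lt_pi (by positivity) (by nlinarith [pi_pos])

theorem div_sin_mul_pi_div_two_pos {x : ℝ} (hx : 0 < x) (hx2 : x < 2) :
    0 < x / sin (x * π / 2) :=
  div_pos hx (sin_mul_pi_div_two_pos_s10 hx hx2)

theorem div_sin_mul_pi_div_two_lt {x y : ℝ} (hx : 0 < x) (hxy : x < y) (hy : y < 2) :
    x / sin (x * π / 2) < y / sin (y * π / 2) := by
  have h := Real.sin_div_lt_sin_div (x := x * π / 2) (y := y * π / 2) (by positivity)
    (by nlinarith [pi_pos]) (by nlinarith [pi_pos])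
  rw [div_lt_div_iff₀ (by nlinarith [pi_pos]) (by positivity)] at h
  rw [div_lt_div_iff₀ (sin_mul_pi_div_two_pos_s10 hx (by linarith))
    (sin_mul_pi_div_two_pos_s10 (hx.trans hxy) hy)]
  nlinarith [pi_pos]

theorem rpow_div_mul_inv_rpow_mul_lt_one {u v w a b : ℝ} (ha : 0 < a) (hb : 0 < b)
    (hu : 0 < u) (hv : 0 < v) (huw : u < w) (hvw : v < w) :
    u ^ (a / b) * w⁻¹ ^ ((a + b) / b) * v < 1 := by
  have hw : 0 < w := hu.trans huw
  calc u ^ (a / b) * w⁻¹ ^ ((a + b) / b) * v < w ^ (a / b) * w⁻¹ ^ ((a + b) / b) * w := by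
        gcongr
    _ = 1 := by
        rw [inv_rpow hw.le, show (a + b) / b = a / b + 1 by field_simp, rpow_add_one hw.ne']
        field_simp

theorem stmt_10 (q q1 q2 : ℝ) (h1 : 0 < q1) (h2 : q1 < q2) (h3 : q2 < q) (h4 : q ≤ 2) :
    -1 <
      -(((q - q2) / Real.sin ((q - q2) * Real.pi / 2)) ^ ((q - q2) / (q2 - q1)) *
        (Real.sin ((q - q1) * Real.pi / 2) / (q - q1)) ^ ((q - q1) / (q2 - q1)) *
        ((q2 - q1) / Real.sin ((q2 - q1) * Real.pi / 2))) := by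
  have ha : 0 < q - q2 := by linarith
  have hb : 0 < q2 - q1 := by linarith
  have hab : q - q1 < 2 := by linarith
  have key := rpow_div_mul_inv_rpow_mul_lt_one ha hb
    (div_sin_mul_pi_div_two_pos ha (by linarith)) (div_sin_mul_pi_div_two_pos hb (by linarith))
    (div_sin_mul_pi_div_two_lt ha (by linarith) hab) (div_sin_mul_pi_div_two_lt hb (by linarith) hab)
  rw [inv_div, show q - q2 + (q2 - q1) = q - q1 by ring] at key
  linarith
end
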